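/- Let G be a group, A a strongly G-graded ring, and M a module over A. If M is flat over the subring A(Γ) for every finitely generated subgroup Γ of G, then M is flat over A. -/

import Mathlib

open Pointwise

/-- `𝒜` is a strongly `Γ`-graded ring structure on the ring `A`:  `A` is the internal direct
sum of the additive subgroups `𝒜 g` (`g ∈ Γ`), and `A_g · A_h = A_{g·h}` for all `g h : Γ`
(the inclusion `A_g · A_h ⊆ A_{g·h}` is the field `mul_mem`; the reverse inclusion, saying the
grading is *strong*, is the field `strong`). -/
structure IsStronglyGraded {Γ : Type*} [Group Γ] {A : Type*} [Ring A]
    (𝒜 : Γ → AddSubgroup A) : Prop where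
  independent : iSupIndep 𝒜
  iSup_eq_top : ⨆ g, 𝒜 g = ⊤
  one_mem : (1 : A) ∈ 𝒜 1
  mul_mem : ∀ {g h : Γ} {a b : A}, a ∈ 𝒜 g → b ∈ 𝒜 h → a * b ∈ 𝒜 (g * h)
  strong : ∀ g h : Γ, (𝒜 (g * h) : Set A) ⊆
    (AddSubgroup.closure ((𝒜 g : Set A) * (𝒜 h : Set A)) : Set A)

/-- For a subgroup `U ≤ Γ`, the subring `A(U) = ⊕_{u ∈ U} A_u` of `A`.  (For a graded ring, the
additive subgroup `⊕_{u ∈ U} A_u` is a subring, and it coincides with the subring of `A`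
generated by the pieces `𝒜 u`, `u ∈ U`, which is how we realize it here.)  Every `A`-module is
a module over this subring by restriction of scalars.  In particular `gradedSubring 𝒜 ⊥` is the
base ring `A_e` of the graded ring. -/
def gradedSubring {Γ : Type*} [Group Γ] {A : Type*} [Ring A]
    (𝒜 : Γ → AddSubgroup A) (U : Subgroup Γ) : Subring A :=
  Subring.closure (⋃ u ∈ U, (𝒜 u : Set A))

/-- `M` is a flat left `R`-module, expressed by the standard equational criterion of flatness
(valid over an arbitrary, possibly noncommutative, ring): every linear relation
`∑ i, r i • x i = 0` in `M` comes from linear relations in `R`, i.e. there are `y j ∈ M` and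
`a i j ∈ R` with `∑ i, r i * a i j = 0` for all `j` and `x i = ∑ j, a i j • y j` for all `i`. -/
def IsFlatOver (R : Type*) (M : Type*) [Ring R] [AddCommGroup M] [Module R M] : Prop :=
  ∀ (n : ℕ) (r : Fin n → R) (x : Fin n → M), ∑ i, r i • x i = 0 →
    ∃ (m : ℕ) (a : Fin n → Fin m → R) (y : Fin m → M),
      (∀ j, ∑ i, r i * a i j = 0) ∧ ∀ i, x i = ∑ j, a i j • y j

/-!
A relation `∑ i, r i • x i = 0` involves only finitely many coefficients `r i`. Each of them is a
finite sum of homogeneous elements, so all of them lie in `A(Γ)` for the subgroup `Γ` generated by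
finitely many degrees. Flatness over `A(Γ)` then trivializes the relation over `A(Γ) ⊆ A`.
-/

section GradedSubring

variable {G : Type*} [Group G] {A : Type*} [Ring A] (𝒜 : G → AddSubgroup A)

theorem gradedSubring_mono {U V : Subgroup G} (hUV : U ≤ V) :
    gradedSubring 𝒜 U ≤ gradedSubring 𝒜 V :=
  Subring.closure_mono (Set.biUnion_subset_biUnion_left hUV)

theorem mem_gradedSubring_of_mem {U : Subgroup G} {g : G} (hg : g ∈ U) {a : A}
    (ha : a ∈ 𝒜 g) : a ∈ gradedSubring 𝒜 U :=
  Subring.subset_closure (Set.mem_biUnion hg ha)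

theorem exists_fg_mem_gradedSubring (h𝒜 : ⨆ g, 𝒜 g = ⊤) (a : A) :
    ∃ Γ : Subgroup G, Γ.FG ∧ a ∈ gradedSubring 𝒜 Γ := by
  refine AddSubgroup.iSup_induction 𝒜
    (C := fun a => ∃ Γ : Subgroup G, Γ.FG ∧ a ∈ gradedSubring 𝒜 Γ) (h𝒜 ▸ AddSubgroup.mem_top a)
    (fun g a ha => ?_) ⟨⊥, Subgroup.FG.bot, zero_mem _⟩ ?_
  · exact ⟨_, ⟨{g}, by simp [Subgroup.zpowers_eq_closure]⟩,
      mem_gradedSubring_of_mem 𝒜 (Subgroup.mem_zpowers g) ha⟩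
  · rintro a b ⟨Γ, hΓ, haΓ⟩ ⟨Δ, hΔ, hbΔ⟩
    exact ⟨Γ ⊔ Δ, hΓ.sup hΔ, add_mem (gradedSubring_mono 𝒜 le_sup_left haΓ)
      (gradedSubring_mono 𝒜 le_sup_right hbΔ)⟩

theorem exists_fg_forall_mem_gradedSubring (h𝒜 : ⨆ g, 𝒜 g = ⊤) {ι : Type*} [Finite ι]
    (r : ι → A) : ∃ Γ : Subgroup G, Γ.FG ∧ ∀ i, r i ∈ gradedSubring 𝒜 Γ := by
  choose Γ hΓ hr using exists_fg_mem_gradedSubring 𝒜 h𝒜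
  exact ⟨⨆ i, Γ (r i), Subgroup.FG.iSup _ fun i => hΓ (r i),
    fun i => gradedSubring_mono 𝒜 (le_iSup (fun i => Γ (r i)) i) (hr (r i))⟩

end GradedSubring

theorem isFlatOver_of_forall_exists_subring {A M : Type*} [Ring A] [AddCommGroup M] [Module A M]
    (h : ∀ (n : ℕ) (r : Fin n → A), ∃ S : Subring A, IsFlatOver S M ∧ ∀ i, r i ∈ S) :
    IsFlatOver A M := by
  intro n r x hrx
  obtain ⟨S, hS, hrS⟩ := h n r
  obtain ⟨m, a, y, hra, hxa⟩ := hS n (fun i => ⟨r i, hrS i⟩) x hrx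
  refine ⟨m, fun i j => a i j, y, fun j => ?_, hxa⟩
  simpa using congrArg Subtype.val (hra j)

/-- **Lemma 2.1.**  Let `A` be a strongly `G`-graded ring and `M` an `A`-module.  If `M` is
flat over the subring `A(Γ)` for every finitely generated subgroup `Γ` of `G`, then `M` is
flat over `A`. -/
theorem flat_of_forall_fg_subgroup_flat {G : Type*} [Group G] {A : Type*} [Ring A]
    (𝒜 : G → AddSubgroup A) (hA : IsStronglyGraded 𝒜)
    (M : Type*) [AddCommGroup M] [Module A M]
    (h : ∀ Γ : Subgroup G, Γ.FG → IsFlatOver (gradedSubring 𝒜 Γ) M) :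
    IsFlatOver A M :=
  isFlatOver_of_forall_exists_subring fun _ r =>
    let ⟨Γ, hΓ, hr⟩ := exists_fg_forall_mem_gradedSubring 𝒜 hA.iSup_eq_top r
    ⟨gradedSubring 𝒜 Γ, h Γ hΓ, hr⟩
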